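/- arXiv:1804.07671 — 2 statements merged into one kernel-verified Lean document; each statement's English description precedes it below -/
import Mathlib

section
/- Let m ≥ 2 be an integer. Define rational sequences (K_k)_{k ≥ 0} and (χ_k)_{k ≥ 0} by K_0 = 8, χ_0 = 1, and for k ≥ 1: K_k = m·K_{k−1} + ((m−1)²/m)·(2m^{k+1}) + 2(m−1)·(2m^k((m−1)(k−1) − 2)), and χ_k = m·χ_{k−1} + ((m−1)(2m−1)/(12m))·(2m^{k+1}) + ((m−1)/4)·(2m^k((m−1)(k−1) − 2)). Then for all k ≥ 0, K_k − 8·χ_k = −(2k/3)·m^k·(m² − 1); in particular K_k − 8χ_k < 0 for k ≥ 1. -/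
/-- **`K² − 8χ` for the tower of cyclic covers (Section 2).**
For `m ≥ 2` and the sequences `K_k`, `χ_k` given by the cyclic-cover recursions with
`K₀ = 8`, `χ₀ = 1`, one has `K_k − 8χ_k = −(2k/3)·m^k·(m² − 1)`; in particular
`K_k − 8χ_k < 0` for `k ≥ 1`. -/
theorem stmt_7 (m : ℕ) (hm : 2 ≤ m) (K χ : ℕ → ℚ)
    (hK0 : K 0 = 8) (hχ0 : χ 0 = 1)
    (hK : ∀ k : ℕ, K (k + 1) = (m : ℚ) * K k
        + (((m : ℚ) - 1) ^ 2 / (m : ℚ)) * (2 * (m : ℚ) ^ (k + 2))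
        + 2 * ((m : ℚ) - 1) * (2 * (m : ℚ) ^ (k + 1) * (((m : ℚ) - 1) * (k : ℚ) - 2)))
    (hχ : ∀ k : ℕ, χ (k + 1) = (m : ℚ) * χ k
        + ((((m : ℚ) - 1) * (2 * (m : ℚ) - 1)) / (12 * (m : ℚ))) * (2 * (m : ℚ) ^ (k + 2))
        + (((m : ℚ) - 1) / 4) * (2 * (m : ℚ) ^ (k + 1) * (((m : ℚ) - 1) * (k : ℚ) - 2))) :
    (∀ k : ℕ, K k - 8 * χ k = -(2 * (k : ℚ) / 3) * (m : ℚ) ^ k * ((m : ℚ) ^ 2 - 1)) ∧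
    (∀ k : ℕ, 1 ≤ k → K k - 8 * χ k < 0) := by
  have hm1 : (1:ℚ) < (m:ℚ) := by exact_mod_cast lt_of_lt_of_le one_lt_two hm
  have hm0 : (m:ℚ) ≠ 0 := by positivity
  have main : ∀ k : ℕ, K k - 8 * χ k = -(2 * (k : ℚ) / 3) * (m : ℚ) ^ k * ((m : ℚ) ^ 2 - 1) := by
    intro k
    induction k with
    | zero => simp [hK0, hχ0]
    | succ k ih =>
      rw [hK k, hχ k]
      push_cast
      have hK8 : K k = 8 * χ k + (-(2 * (k : ℚ) / 3) * (m : ℚ) ^ k * ((m : ℚ) ^ 2 - 1)) := by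
        linarith [ih]
      rw [hK8]
      field_simp
      ring
  refine ⟨main, fun k hk => ?_⟩
  rw [main k]
  have h1 : (0:ℚ) < 2 * (k:ℚ) / 3 := by
    have : (1:ℚ) ≤ (k:ℚ) := by exact_mod_cast hk
    linarith
  have h2 : (0:ℚ) < (m:ℚ) ^ k := by positivity
  have h3 : (0:ℚ) < (m:ℚ) ^ 2 - 1 := by nlinarith
  nlinarith [mul_pos (mul_pos h1 h2) h3]
end

section
/- Let m ≥ 2 be an integer and let (K_k) and (χ_k) be the rational sequences defined by K_0 = 8, χ_0 = 1, K_k = m·K_{k−1} + ((m−1)²/m)·(2m^{k+1}) + 2(m−1)·(2m^k((m−1)(k−1) − 2)) and χ_k = m·χ_{k−1} + ((m−1)(2m−1)/(12m))·(2m^{k+1}) + ((m−1)/4)·(2m^k((m−1)(k−1) − 2)) for k ≥ 1. Then χ_k > 0 for all k, and the ratio K_k / χ_k tends to 8 as k → ∞. -/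
/-!
Both recursions solve in closed form: with `x = (m - 1) k`,
`K_k = 2 m^k (x - 2)²` and `12 χ_k = m^k (3x² + (m - 11)x + 12)`.
The quadratic is positive for `x ≥ 0`, so `χ_k > 0`, and the powers of `m` cancel in the slope:
`K_k / χ_k = 24 (x - 2)² / (3x² + (m - 11)x + 12)`, which tends to `24 / 3 = 8` as `x → ∞`.
-/

open Filter Topology

namespace CuboidTower

section ClosedForms

variable {𝕜 : Type*} [Field 𝕜] {m : 𝕜}

theorem K_closed_form (hm : m ≠ 0) {K : ℕ → 𝕜} (h0 : K 0 = 8)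
    (hK : ∀ k : ℕ, K (k + 1) = m * K k + ((m - 1) ^ 2 / m) * (2 * m ^ (k + 2))
        + 2 * (m - 1) * (2 * m ^ (k + 1) * ((m - 1) * (k : 𝕜) - 2))) (k : ℕ) :
    K k = 2 * m ^ k * ((m - 1) * k - 2) ^ 2 := by
  induction k with
  | zero => simp [h0]; norm_num
  | succ k ih => rw [hK, ih]; push_cast; field_simp; ring

theorem χ_closed_form [CharZero 𝕜] (hm : m ≠ 0) {χ : ℕ → 𝕜} (h0 : χ 0 = 1)
    (hχ : ∀ k : ℕ, χ (k + 1) = m * χ k + (((m - 1) * (2 * m - 1)) / (12 * m)) * (2 * m ^ (k + 2))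
        + ((m - 1) / 4) * (2 * m ^ (k + 1) * ((m - 1) * (k : 𝕜) - 2))) (k : ℕ) :
    χ k = m ^ k * (3 * ((m - 1) * k) ^ 2 + (m - 11) * ((m - 1) * k) + 12) / 12 := by
  induction k with
  | zero => simp [h0]
  | succ k ih => rw [hχ, ih]; push_cast; field_simp; ring

end ClosedForms

-- `(m - 11) x ≥ -10 x`, and `3x² - 10x + 12 = ((3x - 5)² + 11) / 3`.
theorem χ_quadratic_pos {𝕜 : Type*} [Field 𝕜] [LinearOrder 𝕜] [IsStrictOrderedRing 𝕜]
    {m x : 𝕜} (hm : 1 ≤ m) (hx : 0 ≤ x) : 0 < 3 * x ^ 2 + (m - 11) * x + 12 := by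
  nlinarith [sq_nonneg (3 * x - 5), mul_nonneg (sub_nonneg.2 hm) hx]

theorem tendsto_slope (m : ℝ) :
    Tendsto (fun x : ℝ => 24 * (x - 2) ^ 2 / (3 * x ^ 2 + (m - 11) * x + 12)) atTop (𝓝 8) := by
  have hinv := tendsto_inv_atTop_zero (𝕜 := ℝ)
  have hlim : Tendsto (fun x : ℝ => 24 * (1 - 2 * x⁻¹) ^ 2 / (3 + (m - 11) * x⁻¹ + 12 * x⁻¹ ^ 2))
      atTop (𝓝 (24 * (1 - 2 * 0) ^ 2 / (3 + (m - 11) * 0 + 12 * 0 ^ 2))) := by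
    refine Tendsto.div ?_ ?_ (by norm_num)
    · exact ((tendsto_const_nhds.sub (hinv.const_mul 2)).pow 2).const_mul 24
    · exact (tendsto_const_nhds.add (hinv.const_mul _)).add ((hinv.pow 2).const_mul 12)
  norm_num at hlim
  refine hlim.congr' ?_
  filter_upwards [eventually_gt_atTop 0] with x hx
  field_simp

end CuboidTower

/-- **The slope `K²/χ` of the tower tends to `8` (Section 2).**
For `m ≥ 2` and the sequences `K_k`, `χ_k` given by the cyclic-cover recursions with
`K₀ = 8`, `χ₀ = 1`, one has `χ_k > 0` for all `k`, and `K_k / χ_k → 8` as `k → ∞`. -/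
theorem stmt_8 (m : ℕ) (hm : 2 ≤ m) (K χ : ℕ → ℚ)
    (hK0 : K 0 = 8) (hχ0 : χ 0 = 1)
    (hK : ∀ k : ℕ, K (k + 1) = (m : ℚ) * K k
        + (((m : ℚ) - 1) ^ 2 / (m : ℚ)) * (2 * (m : ℚ) ^ (k + 2))
        + 2 * ((m : ℚ) - 1) * (2 * (m : ℚ) ^ (k + 1) * (((m : ℚ) - 1) * (k : ℚ) - 2)))
    (hχ : ∀ k : ℕ, χ (k + 1) = (m : ℚ) * χ k
        + ((((m : ℚ) - 1) * (2 * (m : ℚ) - 1)) / (12 * (m : ℚ))) * (2 * (m : ℚ) ^ (k + 2))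
        + (((m : ℚ) - 1) / 4) * (2 * (m : ℚ) ^ (k + 1) * (((m : ℚ) - 1) * (k : ℚ) - 2))) :
    (∀ k : ℕ, 0 < χ k) ∧
    Tendsto (fun k : ℕ => ((K k : ℝ) / (χ k : ℝ))) atTop (nhds 8) := by
  have hm1 : (1 : ℝ) < m := by exact_mod_cast hm
  have hm0 : (m : ℚ) ≠ 0 := by positivity
  have hq (k : ℕ) : (0 : ℝ) < 3 * ((m - 1) * k) ^ 2 + (m - 11) * ((m - 1) * k) + 12 :=
    CuboidTower.χ_quadratic_pos hm1.le (mul_nonneg (by linarith) k.cast_nonneg)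
  have hχR (k : ℕ) :
      (χ k : ℝ) = m ^ k * (3 * ((m - 1) * k) ^ 2 + (m - 11) * ((m - 1) * k) + 12) / 12 := by
    rw [CuboidTower.χ_closed_form hm0 hχ0 hχ k]; push_cast; ring
  refine ⟨fun k => ?_, ?_⟩
  · have := hq k
    exact_mod_cast (show (0 : ℝ) < χ k by rw [hχR]; positivity)
  have hx : Tendsto (fun k : ℕ => ((m : ℝ) - 1) * k) atTop atTop :=
    tendsto_natCast_atTop_atTop.const_mul_atTop (by linarith)
  refine ((CuboidTower.tendsto_slope m).comp hx).congr fun k => ?_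
  have hmk : (m : ℝ) ^ k ≠ 0 := by positivity
  have hqk := (hq k).ne'
  rw [Function.comp_apply, hχR, CuboidTower.K_closed_form hm0 hK0 hK k]
  push_cast
  field_simp
  ring
end
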